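/- Assume Hypothesis (*). Then every element of G fixes B and B' setwise; there is an integer ℓ ≥ 2 such that every N-orbit C on B' has size ℓ and any two distinct vertices in the same N-orbit on B' are at distance at least 4 in Γ; and each vertex x ∈ B is adjacent to exactly one vertex in each N-orbit on B', so every vertex of B has valency r. -/

import Mathlib

open SimpleGraph

section Prelude

variable {V : Type*}

/-- `g` is an automorphism of the graph `Γ`. -/
def IsGraphAut (Γ : SimpleGraph V) (g : Equiv.Perm V) : Prop :=
  ∀ u v : V, Γ.Adj (g u) (g v) ↔ Γ.Adj u v

/-- `(B | Bᶜ)` is an (ordered) bipartition of `Γ`: every edge joins `B` and `Bᶜ`. -/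
def IsBipartition (Γ : SimpleGraph V) (B : Set V) : Prop :=
  ∀ u v : V, Γ.Adj u v → (u ∈ B ↔ v ∉ B)

/-- The orbit of `x` under a subgroup `N` of permutations of `V`. -/
def POrbit (N : Subgroup (Equiv.Perm V)) (x : V) : Set V :=
  {y | ∃ n ∈ N, n x = y}

/-- `Γ` is locally `(G,s)`-distance transitive: the diameter is at least `s` and for
every vertex `v` and every `1 ≤ i ≤ s` the stabiliser of `v` in `G` is transitive on
the set of vertices at distance `i` from `v`. -/
def LocallyDistTrans (Γ : SimpleGraph V) (G : Subgroup (Equiv.Perm V)) (s : ℕ) : Prop :=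
  s ≤ Γ.diam ∧
    ∀ (v x y : V) (i : ℕ), 1 ≤ i → i ≤ s → Γ.dist v x = i → Γ.dist v y = i →
      ∃ g ∈ G, g v = v ∧ g x = y

/-- `Γ`, bipartite with ordered bipartition `(B | Bᶜ)`, is `r`-starlike relative to `N`:
`N` leaves `B` invariant, is transitive on `B`, and has exactly `r` orbits on `Bᶜ`. -/
def IsStarlike (Γ : SimpleGraph V) (B : Set V) (N : Subgroup (Equiv.Perm V)) (r : ℕ) : Prop :=
  (∀ n ∈ N, ∀ v : V, n v ∈ B ↔ v ∈ B) ∧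
    (∀ x ∈ B, ∀ y ∈ B, ∃ n ∈ N, n x = y) ∧
    {S : Set V | ∃ x ∈ Bᶜ, S = POrbit N x}.ncard = r

/-- `G` is transitive on the set `S` of (ordered) pairs. -/
def PairTrans (G : Subgroup (Equiv.Perm V)) (S : Set (V × V)) : Prop :=
  ∀ p ∈ S, ∀ q ∈ S, ∃ g ∈ G, g p.1 = q.1 ∧ g p.2 = q.2

/-- The adjacency design of the bipartite graph `Γ` with ordered bipartition `(B | Bᶜ)`
(points `B`, blocks `Bᶜ`, incidence = adjacency) is `G`-pairwise transitive. -/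
def AdjPT (Γ : SimpleGraph V) (B : Set V) (G : Subgroup (Equiv.Perm V)) : Prop :=
  (∀ g ∈ G, ∀ v : V, g v ∈ B ↔ v ∈ B) ∧
  PairTrans G {p | p.1 ∈ B ∧ p.2 ∈ Bᶜ ∧ Γ.Adj p.1 p.2} ∧
  PairTrans G {p | p.1 ∈ B ∧ p.2 ∈ Bᶜ ∧ ¬ Γ.Adj p.1 p.2} ∧
  PairTrans G {p | p.1 ∈ B ∧ p.2 ∈ B ∧ p.1 ≠ p.2 ∧ ∃ b ∈ Bᶜ, Γ.Adj p.1 b ∧ Γ.Adj p.2 b} ∧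
  PairTrans G {p | p.1 ∈ B ∧ p.2 ∈ B ∧ p.1 ≠ p.2 ∧ ¬ ∃ b ∈ Bᶜ, Γ.Adj p.1 b ∧ Γ.Adj p.2 b} ∧
  PairTrans G {p | p.1 ∈ Bᶜ ∧ p.2 ∈ Bᶜ ∧ p.1 ≠ p.2 ∧ ∃ x ∈ B, Γ.Adj x p.1 ∧ Γ.Adj x p.2} ∧
  PairTrans G {p | p.1 ∈ Bᶜ ∧ p.2 ∈ Bᶜ ∧ p.1 ≠ p.2 ∧ ¬ ∃ x ∈ B, Γ.Adj x p.1 ∧ Γ.Adj x p.2}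

/-- The adjacency design of `Γ` (points `B`, blocks `Bᶜ`) is `N`-nicely affine:
`N` acts as automorphisms preserving the biparts, transitively on points, and there is a
constant `μ` such that distinct blocks in different `N`-orbits have exactly `μ` common
points, while distinct blocks in the same `N`-orbit have no common point. -/
def AdjNA (Γ : SimpleGraph V) (B : Set V) (N : Subgroup (Equiv.Perm V)) : Prop :=
  (∀ n ∈ N, ∀ v : V, n v ∈ B ↔ v ∈ B) ∧
  (∀ x ∈ B, ∀ y ∈ B, ∃ n ∈ N, n x = y) ∧
  ∃ μ : ℕ, ∀ b ∈ Bᶜ, ∀ b' ∈ Bᶜ, b ≠ b' →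
    ((b' ∈ POrbit N b → ¬ ∃ x, Γ.Adj x b ∧ Γ.Adj x b') ∧
     (b' ∉ POrbit N b → {x | Γ.Adj x b ∧ Γ.Adj x b'}.ncard = μ))

/-- The adjacency design of `Γ` (points `B`, blocks `Bᶜ`) is affine: the blocks can be
partitioned into parallel classes, and there is a positive constant `μ` such that blocks
in distinct parallel classes have exactly `μ` common points. -/
def AdjAffine (Γ : SimpleGraph V) (B : Set V) : Prop :=
  ∃ 𝓒 : Set (Set V), (∀ C ∈ 𝓒, C ⊆ Bᶜ) ∧ (∀ b ∈ Bᶜ, ∃! C, C ∈ 𝓒 ∧ b ∈ C) ∧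
    (∀ C ∈ 𝓒, ∀ x ∈ B, ∃! b, b ∈ C ∧ Γ.Adj x b) ∧
    ∃ μ : ℕ, 0 < μ ∧ ∀ C ∈ 𝓒, ∀ C' ∈ 𝓒, C ≠ C' → ∀ b ∈ C, ∀ b' ∈ C',
      {x | Γ.Adj x b ∧ Γ.Adj x b'}.ncard = μ

end Prelude

section DesignPrelude

variable {P L : Type*}

/-- The design `(P, L, I)` is `G`-pairwise transitive. -/
def DesignPT (I : P → L → Prop) (G : Type*) [Group G] [MulAction G P] [MulAction G L] :
    Prop :=
  (∀ (x : P) (b : L) (x' : P) (b' : L), I x b → I x' b' →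
      ∃ g : G, g • x = x' ∧ g • b = b') ∧
  (∀ (x : P) (b : L) (x' : P) (b' : L), ¬ I x b → ¬ I x' b' →
      ∃ g : G, g • x = x' ∧ g • b = b') ∧
  (∀ x y x' y' : P, x ≠ y → x' ≠ y' → (∃ b, I x b ∧ I y b) → (∃ b, I x' b ∧ I y' b) →
      ∃ g : G, g • x = x' ∧ g • y = y') ∧
  (∀ x y x' y' : P, x ≠ y → x' ≠ y' → ¬ (∃ b, I x b ∧ I y b) → ¬ (∃ b, I x' b ∧ I y' b) →
      ∃ g : G, g • x = x' ∧ g • y = y') ∧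
  (∀ b c b' c' : L, b ≠ c → b' ≠ c' → (∃ x, I x b ∧ I x c) → (∃ x, I x b' ∧ I x c') →
      ∃ g : G, g • b = b' ∧ g • c = c') ∧
  (∀ b c b' c' : L, b ≠ c → b' ≠ c' → ¬ (∃ x, I x b ∧ I x c) → ¬ (∃ x, I x b' ∧ I x c') →
      ∃ g : G, g • b = b' ∧ g • c = c')

/-- The design `(P, L, I)` is `N`-nicely affine for the subgroup `N` of `G`. -/
def DesignNA (I : P → L → Prop) (G : Type*) [Group G] [MulAction G P] [MulAction G L]
    (N : Subgroup G) : Prop :=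
  (∀ x y : P, ∃ n ∈ N, n • x = y) ∧
  ∃ μ : ℕ, ∀ b b' : L, b ≠ b' →
    (((∃ n ∈ N, n • b = b') → ¬ ∃ x, I x b ∧ I x b') ∧
     ((¬ ∃ n ∈ N, n • b = b') → {x | I x b ∧ I x b'}.ncard = μ))

/-- The incidence graph of the design `(P, L, I)`. -/
def DIncGraph (I : P → L → Prop) : SimpleGraph (P ⊕ L) :=
  SimpleGraph.fromRel (fun a b => ∃ x s, a = Sum.inl x ∧ b = Sum.inr s ∧ I x s)

end DesignPrelude

section SetDesign

variable {V : Type*}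

/-- Pairwise transitivity for a design whose points are the elements of `V`, whose
blocks are the members of `𝓑` (identified with their point-sets) and whose
incidence relation is membership; `G` is a group of permutations of `V`. -/
def SetPT (𝓑 : Set (Set V)) (G : Subgroup (Equiv.Perm V)) : Prop :=
  (∀ x : V, ∀ s ∈ 𝓑, ∀ x' : V, ∀ s' ∈ 𝓑, x ∈ s → x' ∈ s' →
      ∃ g ∈ G, g x = x' ∧ (fun z => g z) '' s = s') ∧
  (∀ x : V, ∀ s ∈ 𝓑, ∀ x' : V, ∀ s' ∈ 𝓑, x ∉ s → x' ∉ s' →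
      ∃ g ∈ G, g x = x' ∧ (fun z => g z) '' s = s') ∧
  (∀ x y x' y' : V, x ≠ y → x' ≠ y' → (∃ s ∈ 𝓑, x ∈ s ∧ y ∈ s) → (∃ s ∈ 𝓑, x' ∈ s ∧ y' ∈ s) →
      ∃ g ∈ G, g x = x' ∧ g y = y') ∧
  (∀ x y x' y' : V, x ≠ y → x' ≠ y' → ¬ (∃ s ∈ 𝓑, x ∈ s ∧ y ∈ s) → ¬ (∃ s ∈ 𝓑, x' ∈ s ∧ y' ∈ s) →
      ∃ g ∈ G, g x = x' ∧ g y = y') ∧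
  (∀ s ∈ 𝓑, ∀ t ∈ 𝓑, ∀ s' ∈ 𝓑, ∀ t' ∈ 𝓑, s ≠ t → s' ≠ t' →
      (s ∩ t).Nonempty → (s' ∩ t').Nonempty →
      ∃ g ∈ G, (fun z => g z) '' s = s' ∧ (fun z => g z) '' t = t') ∧
  (∀ s ∈ 𝓑, ∀ t ∈ 𝓑, ∀ s' ∈ 𝓑, ∀ t' ∈ 𝓑, s ≠ t → s' ≠ t' →
      s ∩ t = ∅ → s' ∩ t' = ∅ →
      ∃ g ∈ G, (fun z => g z) '' s = s' ∧ (fun z => g z) '' t = t')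

/-- Nice affineness for a design with point set `V`, blocks `𝓑` (point-sets) and
incidence given by membership, relative to a permutation group `N`. -/
def SetNA (𝓑 : Set (Set V)) (N : Subgroup (Equiv.Perm V)) : Prop :=
  (∀ x y : V, ∃ n ∈ N, n x = y) ∧
  (∀ n ∈ N, ∀ s ∈ 𝓑, (fun z => n z) '' s ∈ 𝓑) ∧
  ∃ μ : ℕ, ∀ s ∈ 𝓑, ∀ s' ∈ 𝓑, s ≠ s' →
    (((∃ n ∈ N, (fun z => n z) '' s = s') → s ∩ s' = ∅) ∧
     ((¬ ∃ n ∈ N, (fun z => n z) '' s = s') → (s ∩ s').ncard = μ))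

end SetDesign

section QuotientGraph

variable {V : Type*}

/-- The setoid on vertices whose classes are the `N`-orbits. -/
def orbitSetoid (N : Subgroup (Equiv.Perm V)) : Setoid V where
  r x y := ∃ n ∈ N, n x = y
  iseqv := by
    refine ⟨fun x => ⟨1, N.one_mem, rfl⟩, ?_, ?_⟩
    · rintro x y ⟨n, hn, rfl⟩
      exact ⟨n⁻¹, N.inv_mem hn, by simp⟩
    · rintro x y z ⟨n, hn, rfl⟩ ⟨m, hm, rfl⟩
      exact ⟨m * n, N.mul_mem hm hn, rfl⟩

/-- The normal quotient graph `Γ_N`: vertices are the `N`-orbits, two distinct orbits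
being adjacent iff some vertex of one is adjacent to some vertex of the other. -/
def quotGraph (Γ : SimpleGraph V) (N : Subgroup (Equiv.Perm V)) :
    SimpleGraph (Quotient (orbitSetoid N)) :=
  SimpleGraph.fromRel (fun a b => ∃ x y : V, Γ.Adj x y ∧
    Quotient.mk (orbitSetoid N) x = a ∧ Quotient.mk (orbitSetoid N) y = b)

end QuotientGraph

section Subdivision

variable {W : Type*}

/-- The subdivision graph `S(Σ)` of a graph `Σ`: vertices are `EΣ ⊕ VΣ`, an edge
being adjacent to its endpoints. -/
def SubdivisionGraph (Sg : SimpleGraph W) : SimpleGraph (↥Sg.edgeSet ⊕ W) :=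
  SimpleGraph.fromRel (fun a b => ∃ (e : Sg.edgeSet) (w : W),
    a = Sum.inl e ∧ b = Sum.inr w ∧ w ∈ (e : Sym2 W))

/-- The graph on `B'` in which two vertices are adjacent iff they are at distance `2`
in `Γ`. -/
def distTwoGraph (Γ : SimpleGraph W) (B' : Set W) : SimpleGraph ↥B' where
  Adj a b := Γ.dist ↑a ↑b = 2
  symm := by
    constructor
    intro a b h
    rwa [SimpleGraph.dist_comm]
  loopless := by
    constructor
    intro a h
    simp [SimpleGraph.dist_self] at h

/-- `f 0, f 1, …, f t` is a `t`-arc of `Sg`. -/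
def IsArcOf (Sg : SimpleGraph W) (t : ℕ) (f : ℕ → W) : Prop :=
  (∀ i : ℕ, i < t → Sg.Adj (f i) (f (i + 1))) ∧
  (∀ i : ℕ, 1 ≤ i → i + 1 ≤ t → f (i - 1) ≠ f (i + 1))

end Subdivision

/-!
An automorphism of a connected bipartite graph preserves the parity of distances, so it fixes or
swaps the two parts; an element of `G` swapping them would carry the single `N`-orbit `B` onto
`Bᶜ`, which consists of `r ≥ 2` orbits.

The heart of the argument: if two vertices `b, b'` of one `N`-orbit on `Bᶜ` were at distance `2`,
then, as `G_b` is transitive on the vertices at distance `2` from `b` and normalises `N`, all of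
them would lie in `N b`. Translating by `N`, the orbit `N b` would be closed under distance `2`,
hence contain every vertex of `Bᶜ` (all reached from `b` by even walks), again contradicting
`r ≥ 2`. So a vertex `x ∈ B` has at most one neighbour in each orbit, and at least one since `N`
is transitive on `B`. Transitivity of `G_x` on the neighbours of `x` then makes all orbits equally
large, and orbits of size `1` would make `Γ` complete bipartite.
-/

namespace SimpleGraph

variable {V V' : Type*} {G : SimpleGraph V} {G' : SimpleGraph V'}

theorem Reachable.dist_map_le (f : G →g G') {u v : V} (h : G.Reachable u v) :
    G'.dist (f u) (f v) ≤ G.dist u v := by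
  obtain ⟨p, hp⟩ := h.exists_walk_length_eq_dist
  simpa [hp] using G'.dist_le (p.map f)

theorem Iso.dist_apply (e : G ≃g G') (u v : V) : G'.dist (e u) (e v) = G.dist u v := by
  by_cases h : G.Reachable u v
  · refine le_antisymm (h.dist_map_le e.toHom) ?_
    simpa using (Iso.reachable_iff (φ := e).mpr h).dist_map_le e.symm.toHom
  · rw [dist_eq_zero_of_not_reachable h,
      dist_eq_zero_of_not_reachable (mt Iso.reachable_iff.mp h)]

theorem Walk.mem_of_even_length {S : Set V}
    (hS : ∀ c ∈ S, ∀ w z, G.Adj c w → G.Adj w z → z ∈ S)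
    {u v : V} (p : G.Walk u v) (hu : u ∈ S) (hp : Even p.length) : v ∈ S := by
  suffices (u ∈ S → Even p.length → v ∈ S) ∧
      ((∃ c ∈ S, G.Adj c u) → Odd p.length → v ∈ S) from this.1 hu hp
  clear hu hp
  induction p with
  | nil => exact ⟨fun h _ => h, fun _ h => absurd h (by simp)⟩
  | @cons a w v h q ih =>
    simp only [Walk.length_cons, Nat.even_add_one, Nat.odd_add_one, Nat.not_odd_iff_even,
      Nat.not_even_iff_odd]
    exact ⟨fun ha hq => ih.2 ⟨a, ha, h⟩ hq,
      fun ⟨c, hc, hca⟩ hq => ih.1 (hS c hc a w hca h) hq⟩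

end SimpleGraph

section Bipartite

variable {V : Type*} {Γ : SimpleGraph V} {B : Set V}

def IsGraphAut.toIso {g : Equiv.Perm V} (hg : IsGraphAut Γ g) : Γ ≃g Γ :=
  ⟨g, hg _ _⟩

theorem IsGraphAut.dist_apply {g : Equiv.Perm V} (hg : IsGraphAut Γ g) (u v : V) :
    Γ.dist (g u) (g v) = Γ.dist u v :=
  hg.toIso.dist_apply u v

theorem IsBipartition.even_length_iff (hbip : IsBipartition Γ B) {u v : V} (p : Γ.Walk u v) :
    Even p.length ↔ (u ∈ B ↔ v ∈ B) := by
  classical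
  let c : Γ.Coloring Bool := Coloring.mk (fun v => decide (v ∈ B)) fun {v w} h => by
    have := hbip v w h
    by_cases hv : v ∈ B <;> simp_all
  rw [c.even_length_iff_congr p]
  simp [c, Coloring.mk]

theorem IsBipartition.even_dist_iff (hbip : IsBipartition Γ B) (hconn : Γ.Connected)
    (u v : V) : Even (Γ.dist u v) ↔ (u ∈ B ↔ v ∈ B) := by
  obtain ⟨p, hp⟩ := hconn.exists_walk_length_eq_dist u v
  rw [← hp, hbip.even_length_iff]

theorem IsBipartition.dist_eq_two (hbip : IsBipartition Γ B) (hconn : Γ.Connected)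
    {u w v : V} (huw : Γ.Adj u w) (hwv : Γ.Adj w v) (huv : u ≠ v) : Γ.dist u v = 2 := by
  have hle : Γ.dist u v ≤ 2 := by simpa using Γ.dist_le (huw.toWalk.concat hwv)
  have hpos := hconn.pos_dist_of_ne huv
  have hne : Γ.dist u v ≠ 1 := fun h => by
    have := hbip u v (dist_eq_one_iff_adj.mp h)
    have := hbip u w huw
    have := hbip w v hwv
    tauto
  omega

theorem IsBipartition.apply_mem_iff_apply_mem (hbip : IsBipartition Γ B) (hconn : Γ.Connected)
    {g : Equiv.Perm V} (hg : IsGraphAut Γ g) (u v : V) :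
    (g u ∈ B ↔ g v ∈ B) ↔ (u ∈ B ↔ v ∈ B) := by
  rw [← hbip.even_dist_iff hconn, ← hbip.even_dist_iff hconn, hg.dist_apply]

end Bipartite

section Orbits

variable {V : Type*} {N : Subgroup (Equiv.Perm V)}

theorem porbit_eq_orbit (N : Subgroup (Equiv.Perm V)) (x : V) :
    POrbit N x = MulAction.orbit N x := by
  ext y
  simp [POrbit, MulAction.mem_orbit_iff, Subgroup.smul_def]

theorem mem_porbit_self (N : Subgroup (Equiv.Perm V)) (x : V) : x ∈ POrbit N x := by
  rw [porbit_eq_orbit]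
  exact MulAction.mem_orbit_self x

theorem porbit_eq_of_mem {x y : V} (h : y ∈ POrbit N x) : POrbit N y = POrbit N x := by
  rw [porbit_eq_orbit] at h
  rw [porbit_eq_orbit, porbit_eq_orbit]
  exact MulAction.orbit_eq_iff.mpr h

theorem image_porbit {G : Subgroup (Equiv.Perm V)} (hnorm : ∀ g ∈ G, ∀ n ∈ N, g * n * g⁻¹ ∈ N)
    {g : Equiv.Perm V} (hg : g ∈ G) (x : V) :
    (fun z => g z) '' POrbit N x = POrbit N (g x) := by
  ext z
  constructor
  · rintro ⟨_, ⟨n, hn, rfl⟩, rfl⟩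
    exact ⟨g * n * g⁻¹, hnorm g hg n hn, by simp⟩
  · rintro ⟨m, hm, rfl⟩
    refine ⟨(g⁻¹ * m * g) x, ⟨g⁻¹ * m * g, ?_, rfl⟩, by simp⟩
    simpa using hnorm g⁻¹ (G.inv_mem hg) m hm

end Orbits

section Starlike

variable {V : Type*} {Γ : SimpleGraph V} {B : Set V} {G N : Subgroup (Equiv.Perm V)} {r s : ℕ}

theorem IsStarlike.notMem_of_mem_porbit (hstar : IsStarlike Γ B N r) {b c : V} (hb : b ∉ B)
    (hc : c ∈ POrbit N b) : c ∉ B := by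
  obtain ⟨n, hn, rfl⟩ := hc
  exact fun h => hb ((hstar.1 n hn b).mp h)

theorem IsStarlike.eq_porbit (hstar : IsStarlike Γ B N r) {x : V} (hx : x ∈ B) :
    B = POrbit N x :=
  Set.ext fun y => ⟨hstar.2.1 x hx y, fun ⟨n, hn, hy⟩ => hy ▸ (hstar.1 n hn x).mpr hx⟩

theorem IsStarlike.exists_notMem_porbit (hstar : IsStarlike Γ B N r) (hr : 2 ≤ r) (x : V) :
    ∃ z ∉ B, z ∉ POrbit N x := by
  by_contra! h
  have hsub : {S : Set V | ∃ z ∈ Bᶜ, S = POrbit N z} ⊆ {POrbit N x} := by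
    rintro _ ⟨z, hz, rfl⟩
    exact porbit_eq_of_mem (h z hz)
  have := Set.ncard_le_ncard hsub
  rw [Set.ncard_singleton, hstar.2.2] at this
  omega

theorem IsStarlike.exists_mem (hconn : Γ.Connected) (hbip : IsBipartition Γ B)
    (hstar : IsStarlike Γ B N r) (hr : 2 ≤ r) : ∃ x, x ∈ B := by
  obtain ⟨b, hb, -⟩ := hstar.exists_notMem_porbit hr hconn.nonempty.some
  obtain ⟨z, -, hz⟩ := hstar.exists_notMem_porbit hr b
  have : Nontrivial V := nontrivial_of_ne z b fun h => hz (h ▸ mem_porbit_self N z)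
  obtain ⟨x, hbx⟩ := hconn.preconnected.exists_adj_of_nontrivial b
  exact ⟨x, (hbip b x hbx).not_left.mp hb⟩

theorem IsStarlike.apply_mem_iff (hconn : Γ.Connected) (hbip : IsBipartition Γ B)
    (hnorm : ∀ g ∈ G, ∀ n ∈ N, g * n * g⁻¹ ∈ N) (hstar : IsStarlike Γ B N r) (hr : 2 ≤ r)
    {g : Equiv.Perm V} (hg : g ∈ G) (hgaut : IsGraphAut Γ g) (v : V) : g v ∈ B ↔ v ∈ B := by
  have hmaps : ∀ x ∈ B, g x ∈ B := by
    intro x hx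
    by_contra hgx
    obtain ⟨z, hz, hzx⟩ := hstar.exists_notMem_porbit hr (g x)
    have hgz : g⁻¹ z ∈ B := by
      have := hbip.apply_mem_iff_apply_mem hconn hgaut (g⁻¹ z) x
      rw [Equiv.Perm.coe_inv, Equiv.apply_symm_apply] at this
      tauto
    apply hzx
    rw [← image_porbit hnorm hg, ← hstar.eq_porbit hx]
    exact ⟨g⁻¹ z, hgz, by simp⟩
  by_cases hv : v ∈ B
  · exact iff_of_true (hmaps v hv) hv
  · refine iff_of_false (fun hgv => hv ?_) hv
    have := hbip.apply_mem_iff_apply_mem hconn hgaut v (g v)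
    have := hmaps (g v) hgv
    tauto

theorem mem_porbit_of_dist_eq_two (hGaut : ∀ g ∈ G, IsGraphAut Γ g) (hNG : N ≤ G)
    (hnorm : ∀ g ∈ G, ∀ n ∈ N, g * n * g⁻¹ ∈ N) (hs : 2 ≤ s) (hldt : LocallyDistTrans Γ G s)
    {b b' c z : V} (hb' : b' ∈ POrbit N b) (hbb' : Γ.dist b b' = 2) (hc : c ∈ POrbit N b)
    (hcz : Γ.dist c z = 2) : z ∈ POrbit N b := by
  obtain ⟨n, hn, rfl⟩ := hc
  have hnb : POrbit N (n b) = POrbit N b := porbit_eq_of_mem ⟨n, hn, rfl⟩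
  have hnb' : n b' ∈ POrbit N (n b) := by
    rw [hnb, ← porbit_eq_of_mem hb']
    exact ⟨n, hn, rfl⟩
  have hdist : Γ.dist (n b) (n b') = 2 := by rw [(hGaut n (hNG hn)).dist_apply, hbb']
  obtain ⟨g, hg, hgc, hgz⟩ := hldt.2 (n b) (n b') z 2 one_le_two hs hdist hcz
  rw [← hnb, ← hgz, ← hgc, ← image_porbit hnorm hg]
  exact ⟨_, hnb', rfl⟩

theorem dist_ne_two_of_mem_porbit (hconn : Γ.Connected) (hbip : IsBipartition Γ B)
    (hGaut : ∀ g ∈ G, IsGraphAut Γ g) (hNG : N ≤ G)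
    (hnorm : ∀ g ∈ G, ∀ n ∈ N, g * n * g⁻¹ ∈ N) (hstar : IsStarlike Γ B N r) (hr : 2 ≤ r)
    (hs : 2 ≤ s) (hldt : LocallyDistTrans Γ G s)
    {b b' : V} (hb : b ∉ B) (hb' : b' ∈ POrbit N b) : Γ.dist b b' ≠ 2 := by
  intro hbb'
  have hclosed : ∀ c ∈ POrbit N b, ∀ w z, Γ.Adj c w → Γ.Adj w z → z ∈ POrbit N b := by
    intro c hc w z hcw hwz
    by_cases hcz : c = z
    · exact hcz ▸ hc
    · exact mem_porbit_of_dist_eq_two hGaut hNG hnorm hs hldt hb' hbb' hc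
        (hbip.dist_eq_two hconn hcw hwz hcz)
  obtain ⟨z, hz, hzb⟩ := hstar.exists_notMem_porbit hr b
  obtain ⟨p⟩ := hconn b z
  exact hzb (p.mem_of_even_length hclosed (mem_porbit_self N b)
    ((hbip.even_length_iff p).mpr (iff_of_false hb hz)))

theorem existsUnique_adj_mem_porbit (hconn : Γ.Connected) (hbip : IsBipartition Γ B)
    (hGaut : ∀ g ∈ G, IsGraphAut Γ g) (hNG : N ≤ G)
    (hnorm : ∀ g ∈ G, ∀ n ∈ N, g * n * g⁻¹ ∈ N) (hstar : IsStarlike Γ B N r) (hr : 2 ≤ r)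
    (hs : 2 ≤ s) (hldt : LocallyDistTrans Γ G s)
    {x b : V} (hx : x ∈ B) (hb : b ∉ B) : ∃! y, y ∈ POrbit N b ∧ Γ.Adj x y := by
  have : Nontrivial V := nontrivial_of_ne x b fun h => hb (h ▸ hx)
  obtain ⟨w, hbw⟩ := hconn.preconnected.exists_adj_of_nontrivial b
  obtain ⟨n, hn, rfl⟩ := hstar.2.1 w ((hbip b w hbw).not_left.mp hb) x hx
  have hadj : Γ.Adj (n w) (n b) := (hGaut n (hNG hn) w b).mpr hbw.symm
  refine ⟨n b, ⟨⟨n, hn, rfl⟩, hadj⟩, ?_⟩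
  rintro y ⟨hy, hxy⟩
  by_contra hne
  have hnb : n b ∈ POrbit N y := by
    rw [porbit_eq_of_mem hy]
    exact ⟨n, hn, rfl⟩
  exact dist_ne_two_of_mem_porbit hconn hbip hGaut hNG hnorm hstar hr hs hldt
    (hstar.notMem_of_mem_porbit hb hy) hnb (hbip.dist_eq_two hconn hxy.symm hadj hne)

theorem ncard_porbit_eq (hconn : Γ.Connected) (hbip : IsBipartition Γ B)
    (hGaut : ∀ g ∈ G, IsGraphAut Γ g) (hNG : N ≤ G)
    (hnorm : ∀ g ∈ G, ∀ n ∈ N, g * n * g⁻¹ ∈ N) (hstar : IsStarlike Γ B N r) (hr : 2 ≤ r)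
    (hs : 2 ≤ s) (hldt : LocallyDistTrans Γ G s)
    {b b' : V} (hb : b ∉ B) (hb' : b' ∉ B) : (POrbit N b).ncard = (POrbit N b').ncard := by
  obtain ⟨x, hx⟩ := hstar.exists_mem hconn hbip hr
  obtain ⟨c, ⟨hc, hxc⟩, -⟩ :=
    existsUnique_adj_mem_porbit hconn hbip hGaut hNG hnorm hstar hr hs hldt hx hb
  obtain ⟨c', ⟨hc', hxc'⟩, -⟩ :=
    existsUnique_adj_mem_porbit hconn hbip hGaut hNG hnorm hstar hr hs hldt hx hb'
  obtain ⟨g, hg, -, rfl⟩ := hldt.2 x c c' 1 le_rfl (by omega)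
    (dist_eq_one_iff_adj.mpr hxc) (dist_eq_one_iff_adj.mpr hxc')
  rw [← porbit_eq_of_mem hc, ← porbit_eq_of_mem hc', ← image_porbit hnorm hg,
    Set.ncard_image_of_injective _ g.injective]

theorem two_le_ncard_porbit [Finite V] (hconn : Γ.Connected) (hbip : IsBipartition Γ B)
    (hncb : ¬ ∀ x ∈ B, ∀ y ∈ Bᶜ, Γ.Adj x y)
    (hGaut : ∀ g ∈ G, IsGraphAut Γ g) (hNG : N ≤ G)
    (hnorm : ∀ g ∈ G, ∀ n ∈ N, g * n * g⁻¹ ∈ N) (hstar : IsStarlike Γ B N r) (hr : 2 ≤ r)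
    (hs : 2 ≤ s) (hldt : LocallyDistTrans Γ G s)
    {b : V} (hb : b ∉ B) : 2 ≤ (POrbit N b).ncard := by
  by_contra! h
  refine hncb fun x hx y hy => ?_
  have hy1 : (POrbit N y).ncard ≤ 1 := by
    rw [ncard_porbit_eq hconn hbip hGaut hNG hnorm hstar hr hs hldt hy hb]
    omega
  obtain ⟨c, ⟨hc, hxc⟩, -⟩ :=
    existsUnique_adj_mem_porbit hconn hbip hGaut hNG hnorm hstar hr hs hldt hx hy
  rwa [(Set.ncard_le_one_iff (Set.toFinite _)).mp hy1 hc (mem_porbit_self N y)] at hxc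

theorem four_le_dist_of_mem_porbit (hconn : Γ.Connected) (hbip : IsBipartition Γ B)
    (hGaut : ∀ g ∈ G, IsGraphAut Γ g) (hNG : N ≤ G)
    (hnorm : ∀ g ∈ G, ∀ n ∈ N, g * n * g⁻¹ ∈ N) (hstar : IsStarlike Γ B N r) (hr : 2 ≤ r)
    (hs : 2 ≤ s) (hldt : LocallyDistTrans Γ G s)
    {b b' : V} (hb : b ∉ B) (hb' : b' ∈ POrbit N b) (hne : b ≠ b') : 4 ≤ Γ.dist b b' := by
  obtain ⟨k, hk⟩ := (hbip.even_dist_iff hconn b b').mpr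
    (iff_of_false hb (hstar.notMem_of_mem_porbit hb hb'))
  have hpos := hconn.pos_dist_of_ne hne
  have hne2 := dist_ne_two_of_mem_porbit hconn hbip hGaut hNG hnorm hstar hr hs hldt hb hb'
  omega

theorem ncard_neighborSet_eq (hconn : Γ.Connected) (hbip : IsBipartition Γ B)
    (hGaut : ∀ g ∈ G, IsGraphAut Γ g) (hNG : N ≤ G)
    (hnorm : ∀ g ∈ G, ∀ n ∈ N, g * n * g⁻¹ ∈ N) (hstar : IsStarlike Γ B N r) (hr : 2 ≤ r)
    (hs : 2 ≤ s) (hldt : LocallyDistTrans Γ G s)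
    {x : V} (hx : x ∈ B) : (Γ.neighborSet x).ncard = r := by
  have hunique := fun {b} (hb : b ∉ B) =>
    existsUnique_adj_mem_porbit hconn hbip hGaut hNG hnorm hstar hr hs hldt hx hb
  have hinj : Set.InjOn (POrbit N) (Γ.neighborSet x) := by
    intro y hxy y' hxy' he
    have hy : y ∉ B := (hbip x y hxy).mp hx
    exact (hunique hy).unique ⟨mem_porbit_self N y, hxy⟩ ⟨he ▸ mem_porbit_self N y', hxy'⟩
  have himage : POrbit N '' Γ.neighborSet x = {S | ∃ z ∈ Bᶜ, S = POrbit N z} := by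
    ext S
    constructor
    · rintro ⟨y, hxy, rfl⟩
      exact ⟨y, (hbip x y hxy).mp hx, rfl⟩
    · rintro ⟨z, hz, rfl⟩
      obtain ⟨y, ⟨hyz, hxy⟩, -⟩ := hunique hz
      exact ⟨y, hxy, porbit_eq_of_mem hyz⟩
  rw [← hstar.2.2, ← himage, hinj.ncard_image]

end Starlike

theorem statement11_general {V : Type*} [Fintype V] (Γ : SimpleGraph V) (B : Set V)
    (hconn : Γ.Connected) (hbip : IsBipartition Γ B)
    (hncb : ¬ ∀ x ∈ B, ∀ y ∈ Bᶜ, Γ.Adj x y)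
    (G N : Subgroup (Equiv.Perm V)) (hGaut : ∀ g ∈ G, IsGraphAut Γ g)
    (hNG : N ≤ G) (hnorm : ∀ g ∈ G, ∀ n ∈ N, g * n * g⁻¹ ∈ N)
    (r s : ℕ) (hr : 2 ≤ r) (hs : 2 ≤ s)
    (hstar : IsStarlike Γ B N r) (hldt : LocallyDistTrans Γ G s) :
    (∀ g ∈ G, ∀ v : V, g v ∈ B ↔ v ∈ B) ∧
    ∃ ℓ : ℕ, 2 ≤ ℓ ∧
      (∀ x ∈ Bᶜ, (POrbit N x).ncard = ℓ) ∧
      (∀ x ∈ Bᶜ, ∀ y ∈ POrbit N x, x ≠ y → 4 ≤ Γ.dist x y) ∧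
      (∀ x ∈ B, ∀ b ∈ Bᶜ, ∃! y : V, y ∈ POrbit N b ∧ Γ.Adj x y) ∧
      (∀ x ∈ B, (Γ.neighborSet x).ncard = r) := by
  obtain ⟨b₀, hb₀, -⟩ := hstar.exists_notMem_porbit hr hconn.nonempty.some
  refine ⟨fun g hg => hstar.apply_mem_iff hconn hbip hnorm hr hg (hGaut g hg),
    (POrbit N b₀).ncard,
    two_le_ncard_porbit hconn hbip hncb hGaut hNG hnorm hstar hr hs hldt hb₀,
    fun b hb => ncard_porbit_eq hconn hbip hGaut hNG hnorm hstar hr hs hldt hb hb₀,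
    fun b hb _ => four_le_dist_of_mem_porbit hconn hbip hGaut hNG hnorm hstar hr hs hldt hb,
    fun x hx b hb =>
      existsUnique_adj_mem_porbit hconn hbip hGaut hNG hnorm hstar hr hs hldt hx hb,
    fun x hx => ncard_neighborSet_eq hconn hbip hGaut hNG hnorm hstar hr hs hldt hx⟩

/-- **Lemma `cor:star`**.  Under Hypothesis (*) — `Γ` a finite connected bipartite graph
with ordered bipartition `(B|Bᶜ)`, not complete bipartite, `r, s ≥ 2`, `Γ` `r`-starlike
relative to `N`, locally `(G,s)`-distance transitive, `1 ≠ N ⊴ G ≤ Aut Γ` — every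
element of `G` fixes the biparts setwise, there is `ℓ ≥ 2` such that every `N`-orbit on
`Bᶜ` has size `ℓ` and distinct vertices in a common `N`-orbit on `Bᶜ` are at distance at
least `4`; moreover every `x ∈ B` has exactly one neighbour in each `N`-orbit on `Bᶜ`,
so every vertex of `B` has valency `r`. -/
theorem statement11 {V : Type*} [Fintype V] (Γ : SimpleGraph V) (B : Set V)
    (hconn : Γ.Connected) (hbip : IsBipartition Γ B)
    (hncb : ¬ ∀ x ∈ B, ∀ y ∈ Bᶜ, Γ.Adj x y)
    (G N : Subgroup (Equiv.Perm V)) (hGaut : ∀ g ∈ G, IsGraphAut Γ g)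
    (hNG : N ≤ G) (hN1 : N ≠ ⊥) (hnorm : ∀ g ∈ G, ∀ n ∈ N, g * n * g⁻¹ ∈ N)
    (r s : ℕ) (hr : 2 ≤ r) (hs : 2 ≤ s)
    (hstar : IsStarlike Γ B N r) (hldt : LocallyDistTrans Γ G s) :
    (∀ g ∈ G, ∀ v : V, g v ∈ B ↔ v ∈ B) ∧
    ∃ ℓ : ℕ, 2 ≤ ℓ ∧
      (∀ x ∈ Bᶜ, (POrbit N x).ncard = ℓ) ∧
      (∀ x ∈ Bᶜ, ∀ y ∈ POrbit N x, x ≠ y → 4 ≤ Γ.dist x y) ∧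
      (∀ x ∈ B, ∀ b ∈ Bᶜ, ∃! y : V, y ∈ POrbit N b ∧ Γ.Adj x y) ∧
      (∀ x ∈ B, (Γ.neighborSet x).ncard = r) :=
  statement11_general Γ B hconn hbip hncb G N hGaut hNG hnorm r s hr hs hstar hldt
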